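/- Let 𝔤 be a finite-dimensional complex simple Lie algebra with Cartan subalgebra 𝔥, ℓ a nonnegative integer, λ₁ a dominant integral weight with ⟨λ₁,θ⟩ ≤ ℓ where θ is the highest root, and x_θ a highest root vector. Then as left U(𝔤)-modules there is an isomorphism ((L_{λ₁} ⊗ U(𝔤))/W') ⊗_{U(𝔤)/⟨x_θ^{ℓ+1}⟩} L_{λ₂} ≅ (L_{λ₁} ⊗ L_{λ₂})/W, where W' is the subbimodule of L_{λ₁} ⊗ U(𝔤) generated by v_{λ₁} ⊗ x_θ^{ℓ−⟨λ₁,θ⟩+1} and W is the U(𝔤)-submodule of L_{λ₁} ⊗ L_{λ₂} generated by all v_{λ₁} ⊗ x_θ^{ℓ−⟨λ₁,θ⟩+1}·w for w ∈ L_{λ₂}. -/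

import Mathlib

/-!
The map `(v ⊗ u) ⊗ m ↦ v ⊗ u·m` identifies the balanced tensor product `(M₁ ⊗ U(𝔤)) ⊗_{U(𝔤)} M₂`
with `M₁ ⊗ M₂`, with inverse `v ⊗ m ↦ (v ⊗ 1) ⊗ m`, and it turns the left action on the first
factor into the diagonal action. It sends the generator `(v_{λ₁} ⊗ x_θ^q) ⊗ m` of `W' ⊗ M₂`
to the generator `v_{λ₁} ⊗ x_θ^q·m` of `W`; since `W'` and `W` are the smallest submodules
containing these and stable under the respective actions, the identification descends to the
quotients.
-/

open TensorProduct

attribute [local instance 100] LieRing.ofAssociativeRing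

noncomputable section Stmt11

variable (𝔤 : Type) [LieRing 𝔤] [LieAlgebra ℂ 𝔤]
variable (M₁ M₂ : Type)
variable [AddCommGroup M₁] [Module ℂ M₁] [LieRingModule 𝔤 M₁] [LieModule ℂ 𝔤 M₁]
variable [AddCommGroup M₂] [Module ℂ M₂] [LieRingModule 𝔤 M₂] [LieModule ℂ 𝔤 M₂]

/-- The universal enveloping algebra `U(𝔤)`. -/
abbrev UEnv : Type := UniversalEnvelopingAlgebra ℂ 𝔤

/-- The action of `U(𝔤)` on a Lie module, via the universal property. -/
def uAct : UEnv 𝔤 →ₐ[ℂ] Module.End ℂ M₂ :=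
  UniversalEnvelopingAlgebra.lift ℂ (LieModule.toEnd ℂ 𝔤 M₂)

/-- The left `𝔤`-action on `M₁ ⊗ U(𝔤)`: `x·(v ⊗ y) = (x·v) ⊗ y + v ⊗ xy`. -/
def Lact (x : 𝔤) : Module.End ℂ (M₁ ⊗[ℂ] UEnv 𝔤) :=
  TensorProduct.map (LieModule.toEnd ℂ 𝔤 M₁ x) LinearMap.id
    + TensorProduct.map LinearMap.id
        (LinearMap.mulLeft ℂ ((UniversalEnvelopingAlgebra.ι ℂ : 𝔤 →ₗ⁅ℂ⁆ UEnv 𝔤) x))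

/-- The right `U(𝔤)`-action on `M₁ ⊗ U(𝔤)`: `(v ⊗ y)·u = v ⊗ yu`. -/
def Ract (u : UEnv 𝔤) : Module.End ℂ (M₁ ⊗[ℂ] UEnv 𝔤) :=
  TensorProduct.map LinearMap.id (LinearMap.mulRight ℂ u)

/-- The diagonal `𝔤`-action on `M₁ ⊗ M₂`. -/
def Dact (x : 𝔤) : Module.End ℂ (M₁ ⊗[ℂ] M₂) :=
  TensorProduct.map (LieModule.toEnd ℂ 𝔤 M₁ x) LinearMap.id
    + TensorProduct.map LinearMap.id (LieModule.toEnd ℂ 𝔤 M₂ x)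

/-- The sub-bimodule `W'` of `M₁ ⊗ U(𝔤)` generated by `v_{λ₁} ⊗ x_θ^q`. -/
def Wprime (vlam : M₁) (xtheta : 𝔤) (q : ℕ) : Submodule ℂ (M₁ ⊗[ℂ] UEnv 𝔤) :=
  sInf {p | vlam ⊗ₜ (((UniversalEnvelopingAlgebra.ι ℂ : 𝔤 →ₗ⁅ℂ⁆ UEnv 𝔤) xtheta) ^ q) ∈ p
    ∧ (∀ (x : 𝔤), ∀ t ∈ p, Lact 𝔤 M₁ x t ∈ p)
    ∧ (∀ (u : UEnv 𝔤), ∀ t ∈ p, Ract 𝔤 M₁ u t ∈ p)}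

/-- The relation submodule defining `((M₁ ⊗ U)/W') ⊗_{U/⟨x_θ^{ℓ+1}⟩} M₂` as a quotient of
`(M₁ ⊗ U) ⊗ M₂`: elements of `W'` tensored with `M₂`, together with the balancing relations
`(t·u) ⊗ m − t ⊗ (u·m)`. -/
def relSub (vlam : M₁) (xtheta : 𝔤) (q : ℕ) :
    Submodule ℂ ((M₁ ⊗[ℂ] UEnv 𝔤) ⊗[ℂ] M₂) :=
  Submodule.span ℂ
    ({z | ∃ w ∈ Wprime 𝔤 M₁ vlam xtheta q, ∃ m : M₂, z = w ⊗ₜ m}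
      ∪ {z | ∃ (t : M₁ ⊗[ℂ] UEnv 𝔤) (u : UEnv 𝔤) (m : M₂),
          z = (Ract 𝔤 M₁ u t) ⊗ₜ m - t ⊗ₜ (uAct 𝔤 M₂ u m)})

/-- The `U(𝔤)`-submodule `W` of `M₁ ⊗ M₂` generated by the `v_{λ₁} ⊗ x_θ^q ⋅ w`, `w ∈ M₂`. -/
def Wsub (vlam : M₁) (xtheta : 𝔤) (q : ℕ) : Submodule ℂ (M₁ ⊗[ℂ] M₂) :=
  sInf {p | (∀ m : M₂,
      vlam ⊗ₜ (uAct 𝔤 M₂ ((((UniversalEnvelopingAlgebra.ι ℂ : 𝔤 →ₗ⁅ℂ⁆ UEnv 𝔤) xtheta) ^ q)) m)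
        ∈ p)
    ∧ ∀ (x : 𝔤), ∀ t ∈ p, Dact 𝔤 M₁ M₂ x t ∈ p}

/-- The left `𝔤`-action on `(M₁ ⊗ U(𝔤)) ⊗ M₂` through the first (bimodule) factor. -/
def LactTM (x : 𝔤) : Module.End ℂ ((M₁ ⊗[ℂ] UEnv 𝔤) ⊗[ℂ] M₂) :=
  TensorProduct.map (Lact 𝔤 M₁ x) LinearMap.id


def contract : (M₁ ⊗[ℂ] UEnv 𝔤) ⊗[ℂ] M₂ →ₗ[ℂ] M₁ ⊗[ℂ] M₂ :=
  TensorProduct.map LinearMap.id (TensorProduct.lift (uAct 𝔤 M₂).toLinearMap) ∘ₗ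
    (TensorProduct.assoc ℂ M₁ (UEnv 𝔤) M₂).toLinearMap

def unitEmbed : M₁ ⊗[ℂ] M₂ →ₗ[ℂ] (M₁ ⊗[ℂ] UEnv 𝔤) ⊗[ℂ] M₂ :=
  TensorProduct.map ((TensorProduct.mk ℂ M₁ (UEnv 𝔤)).flip 1) LinearMap.id

omit [LieRingModule 𝔤 M₁] [LieModule ℂ 𝔤 M₁] in
@[simp]
lemma contract_tmul (v : M₁) (u : UEnv 𝔤) (m : M₂) :
    contract 𝔤 M₁ M₂ ((v ⊗ₜ u) ⊗ₜ m) = v ⊗ₜ uAct 𝔤 M₂ u m := rfl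

omit [LieRingModule 𝔤 M₁] [LieModule ℂ 𝔤 M₁] [LieRingModule 𝔤 M₂] [LieModule ℂ 𝔤 M₂] in
@[simp]
lemma unitEmbed_tmul (v : M₁) (m : M₂) :
    unitEmbed 𝔤 M₁ M₂ (v ⊗ₜ m) = (v ⊗ₜ (1 : UEnv 𝔤)) ⊗ₜ m := rfl

@[simp]
lemma uAct_ι (x : 𝔤) (m : M₂) :
    uAct 𝔤 M₂ ((UniversalEnvelopingAlgebra.ι ℂ : 𝔤 →ₗ⁅ℂ⁆ UEnv 𝔤) x) m = ⁅x, m⁆ := by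
  simp [uAct]

@[simp]
lemma Lact_tmul (x : 𝔤) (v : M₁) (u : UEnv 𝔤) :
    Lact 𝔤 M₁ x (v ⊗ₜ u) =
      ⁅x, v⁆ ⊗ₜ u + v ⊗ₜ ((UniversalEnvelopingAlgebra.ι ℂ : 𝔤 →ₗ⁅ℂ⁆ UEnv 𝔤) x * u) := rfl

omit [LieRingModule 𝔤 M₁] [LieModule ℂ 𝔤 M₁] in
@[simp]
lemma Ract_tmul (u : UEnv 𝔤) (v : M₁) (y : UEnv 𝔤) :
    Ract 𝔤 M₁ u (v ⊗ₜ y) = v ⊗ₜ (y * u) := rfl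

@[simp]
lemma Dact_tmul (x : 𝔤) (v : M₁) (m : M₂) :
    Dact 𝔤 M₁ M₂ x (v ⊗ₜ m) = ⁅x, v⁆ ⊗ₜ m + v ⊗ₜ ⁅x, m⁆ := rfl

omit [LieRingModule 𝔤 M₂] [LieModule ℂ 𝔤 M₂] in
@[simp]
lemma LactTM_tmul (x : 𝔤) (t : M₁ ⊗[ℂ] UEnv 𝔤) (m : M₂) :
    LactTM 𝔤 M₁ M₂ x (t ⊗ₜ m) = Lact 𝔤 M₁ x t ⊗ₜ m := rfl

omit [LieRingModule 𝔤 M₁] [LieModule ℂ 𝔤 M₁] in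
lemma contract_Ract_tmul (u : UEnv 𝔤) (t : M₁ ⊗[ℂ] UEnv 𝔤) (m : M₂) :
    contract 𝔤 M₁ M₂ (Ract 𝔤 M₁ u t ⊗ₜ m) = contract 𝔤 M₁ M₂ (t ⊗ₜ uAct 𝔤 M₂ u m) := by
  induction t using TensorProduct.induction_on with
  | zero => simp
  | tmul v y => simp
  | add a b ha hb => simp only [map_add, TensorProduct.add_tmul, ha, hb]

lemma contract_LactTM (x : 𝔤) (z : (M₁ ⊗[ℂ] UEnv 𝔤) ⊗[ℂ] M₂) :
    contract 𝔤 M₁ M₂ (LactTM 𝔤 M₁ M₂ x z) = Dact 𝔤 M₁ M₂ x (contract 𝔤 M₁ M₂ z) := by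
  rw [← LinearMap.comp_apply, ← LinearMap.comp_apply (Dact 𝔤 M₁ M₂ x)]
  congr 1
  ext v u m
  simp only [TensorProduct.AlgebraTensorModule.curry_apply, TensorProduct.curry_apply,
    LinearMap.coe_restrictScalars, LinearMap.comp_apply, LactTM_tmul, Lact_tmul, add_tmul,
    map_add, contract_tmul, map_mul, Module.End.mul_apply, uAct_ι, Dact_tmul]

lemma Lact_Ract_comm (x : 𝔤) (u : UEnv 𝔤) (t : M₁ ⊗[ℂ] UEnv 𝔤) :
    Lact 𝔤 M₁ x (Ract 𝔤 M₁ u t) = Ract 𝔤 M₁ u (Lact 𝔤 M₁ x t) := by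
  rw [← Module.End.mul_apply, ← Module.End.mul_apply]
  congr 1
  ext v y
  simp [mul_assoc]

section Relations

variable (vlam : M₁) (xtheta : 𝔤) (q : ℕ)

lemma tmul_pow_mem_Wprime :
    vlam ⊗ₜ ((UniversalEnvelopingAlgebra.ι ℂ : 𝔤 →ₗ⁅ℂ⁆ UEnv 𝔤) xtheta ^ q) ∈
      Wprime 𝔤 M₁ vlam xtheta q :=
  Submodule.mem_sInf.2 fun _ hp => hp.1

lemma tmul_uAct_pow_mem_Wsub (m : M₂) :
    vlam ⊗ₜ uAct 𝔤 M₂ ((UniversalEnvelopingAlgebra.ι ℂ : 𝔤 →ₗ⁅ℂ⁆ UEnv 𝔤) xtheta ^ q) m ∈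
      Wsub 𝔤 M₁ M₂ vlam xtheta q :=
  Submodule.mem_sInf.2 fun _ hp => hp.1 m

lemma tmul_mem_relSub {w : M₁ ⊗[ℂ] UEnv 𝔤} (hw : w ∈ Wprime 𝔤 M₁ vlam xtheta q) (m : M₂) :
    w ⊗ₜ m ∈ relSub 𝔤 M₁ M₂ vlam xtheta q :=
  Submodule.subset_span (Or.inl ⟨w, hw, m, rfl⟩)

lemma Ract_tmul_sub_tmul_uAct_mem_relSub (t : M₁ ⊗[ℂ] UEnv 𝔤) (u : UEnv 𝔤) (m : M₂) :
    Ract 𝔤 M₁ u t ⊗ₜ m - t ⊗ₜ uAct 𝔤 M₂ u m ∈ relSub 𝔤 M₁ M₂ vlam xtheta q :=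
  Submodule.subset_span (Or.inr ⟨t, u, m, rfl⟩)

lemma Lact_mem_Wprime (x : 𝔤) {t : M₁ ⊗[ℂ] UEnv 𝔤} (ht : t ∈ Wprime 𝔤 M₁ vlam xtheta q) :
    Lact 𝔤 M₁ x t ∈ Wprime 𝔤 M₁ vlam xtheta q :=
  Submodule.mem_sInf.2 fun p hp => hp.2.1 x t (Submodule.mem_sInf.1 ht p hp)

lemma Dact_mem_Wsub (x : 𝔤) {t : M₁ ⊗[ℂ] M₂} (ht : t ∈ Wsub 𝔤 M₁ M₂ vlam xtheta q) :
    Dact 𝔤 M₁ M₂ x t ∈ Wsub 𝔤 M₁ M₂ vlam xtheta q :=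
  Submodule.mem_sInf.2 fun p hp => hp.2 x t (Submodule.mem_sInf.1 ht p hp)

lemma contract_tmul_mem_Wsub {w : M₁ ⊗[ℂ] UEnv 𝔤} (hw : w ∈ Wprime 𝔤 M₁ vlam xtheta q)
    (m : M₂) : contract 𝔤 M₁ M₂ (w ⊗ₜ m) ∈ Wsub 𝔤 M₁ M₂ vlam xtheta q := by
  let P : Submodule ℂ (M₁ ⊗[ℂ] UEnv 𝔤) := ⨅ m : M₂,
    (Wsub 𝔤 M₁ M₂ vlam xtheta q).comap
      (contract 𝔤 M₁ M₂ ∘ₗ (TensorProduct.mk ℂ (M₁ ⊗[ℂ] UEnv 𝔤) M₂).flip m)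
  have mem_P {t} : t ∈ P ↔ ∀ m : M₂, contract 𝔤 M₁ M₂ (t ⊗ₜ m) ∈ Wsub 𝔤 M₁ M₂ vlam xtheta q := by
    simp [P, Submodule.mem_iInf]
  have hWP : Wprime 𝔤 M₁ vlam xtheta q ≤ P := by
    refine sInf_le ⟨mem_P.2 (tmul_uAct_pow_mem_Wsub 𝔤 M₁ M₂ vlam xtheta q), ?_, ?_⟩
    · intro x t ht
      exact mem_P.2 fun m => by
        rw [← LactTM_tmul, contract_LactTM]
        exact Dact_mem_Wsub 𝔤 M₁ M₂ vlam xtheta q x (mem_P.1 ht m)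
    · intro u t ht
      exact mem_P.2 fun m => by
        rw [contract_Ract_tmul]
        exact mem_P.1 ht _
  exact mem_P.1 (hWP hw) m

lemma relSub_le_comap_contract :
    relSub 𝔤 M₁ M₂ vlam xtheta q ≤ (Wsub 𝔤 M₁ M₂ vlam xtheta q).comap (contract 𝔤 M₁ M₂) := by
  refine Submodule.span_le.2 ?_
  rintro _ (⟨w, hw, m, rfl⟩ | ⟨t, u, m, rfl⟩)
  · exact contract_tmul_mem_Wsub 𝔤 M₁ M₂ vlam xtheta q hw m
  · simp [contract_Ract_tmul]

lemma relSub_le_comap_LactTM (x : 𝔤) :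
    relSub 𝔤 M₁ M₂ vlam xtheta q ≤ (relSub 𝔤 M₁ M₂ vlam xtheta q).comap (LactTM 𝔤 M₁ M₂ x) := by
  refine Submodule.span_le.2 ?_
  rintro _ (⟨w, hw, m, rfl⟩ | ⟨t, u, m, rfl⟩)
  · exact tmul_mem_relSub 𝔤 M₁ M₂ vlam xtheta q (Lact_mem_Wprime 𝔤 M₁ vlam xtheta q x hw) m
  · simpa only [SetLike.mem_coe, Submodule.mem_comap, map_sub, LactTM_tmul, Lact_Ract_comm]
      using Ract_tmul_sub_tmul_uAct_mem_relSub 𝔤 M₁ M₂ vlam xtheta q (Lact 𝔤 M₁ x t) u m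

lemma mkQ_unitEmbed_Dact (x : 𝔤) :
    (relSub 𝔤 M₁ M₂ vlam xtheta q).mkQ ∘ₗ unitEmbed 𝔤 M₁ M₂ ∘ₗ Dact 𝔤 M₁ M₂ x =
      (relSub 𝔤 M₁ M₂ vlam xtheta q).mkQ ∘ₗ LactTM 𝔤 M₁ M₂ x ∘ₗ unitEmbed 𝔤 M₁ M₂ := by
  ext v m
  simp only [TensorProduct.AlgebraTensorModule.curry_apply, TensorProduct.curry_apply,
    LinearMap.coe_restrictScalars, LinearMap.comp_apply, Submodule.mkQ_apply]
  rw [Submodule.Quotient.eq]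
  convert neg_mem (Ract_tmul_sub_tmul_uAct_mem_relSub 𝔤 M₁ M₂ vlam xtheta q (v ⊗ₜ 1)
    ((UniversalEnvelopingAlgebra.ι ℂ : 𝔤 →ₗ⁅ℂ⁆ UEnv 𝔤) x) m) using 1
  simp only [Dact_tmul, map_add, unitEmbed_tmul, LactTM_tmul, Lact_tmul, Ract_tmul, uAct_ι,
    mul_one, one_mul, add_tmul]
  abel

lemma mkQ_unitEmbed_contract :
    (relSub 𝔤 M₁ M₂ vlam xtheta q).mkQ ∘ₗ unitEmbed 𝔤 M₁ M₂ ∘ₗ contract 𝔤 M₁ M₂ =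
      (relSub 𝔤 M₁ M₂ vlam xtheta q).mkQ := by
  ext v u m
  simp only [TensorProduct.AlgebraTensorModule.curry_apply, TensorProduct.curry_apply,
    LinearMap.coe_restrictScalars, LinearMap.comp_apply, Submodule.mkQ_apply]
  rw [Submodule.Quotient.eq]
  convert neg_mem (Ract_tmul_sub_tmul_uAct_mem_relSub 𝔤 M₁ M₂ vlam xtheta q (v ⊗ₜ 1) u m)
    using 1
  simp only [contract_tmul, unitEmbed_tmul, Ract_tmul, one_mul]
  abel

lemma Wsub_le_comap_unitEmbed :
    Wsub 𝔤 M₁ M₂ vlam xtheta q ≤ (relSub 𝔤 M₁ M₂ vlam xtheta q).comap (unitEmbed 𝔤 M₁ M₂) := by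
  set xq := (UniversalEnvelopingAlgebra.ι ℂ : 𝔤 →ₗ⁅ℂ⁆ UEnv 𝔤) xtheta ^ q
  refine sInf_le ⟨fun m => ?_, fun x t ht => ?_⟩
  · have hgen : (vlam ⊗ₜ xq) ⊗ₜ m ∈ relSub 𝔤 M₁ M₂ vlam xtheta q :=
      tmul_mem_relSub 𝔤 M₁ M₂ vlam xtheta q (tmul_pow_mem_Wprime 𝔤 M₁ vlam xtheta q) m
    have hbal := Ract_tmul_sub_tmul_uAct_mem_relSub 𝔤 M₁ M₂ vlam xtheta q (vlam ⊗ₜ 1) xq m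
    rw [Ract_tmul, one_mul] at hbal
    rw [Submodule.mem_comap, unitEmbed_tmul]
    simpa only [sub_sub_cancel] using sub_mem hgen hbal
  · have hequiv := congr($(mkQ_unitEmbed_Dact 𝔤 M₁ M₂ vlam xtheta q x) t)
    simp only [LinearMap.comp_apply, Submodule.mkQ_apply] at hequiv
    rw [Submodule.mem_comap, ← Submodule.Quotient.mk_eq_zero, hequiv,
      Submodule.Quotient.mk_eq_zero]
    exact relSub_le_comap_LactTM 𝔤 M₁ M₂ vlam xtheta q x ht

def quotientEquiv :
    ((M₁ ⊗[ℂ] UEnv 𝔤) ⊗[ℂ] M₂ ⧸ relSub 𝔤 M₁ M₂ vlam xtheta q) ≃ₗ[ℂ]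
      (M₁ ⊗[ℂ] M₂ ⧸ Wsub 𝔤 M₁ M₂ vlam xtheta q) :=
  LinearEquiv.ofLinearMap
    (Submodule.mapQ _ _ (contract 𝔤 M₁ M₂) (relSub_le_comap_contract 𝔤 M₁ M₂ vlam xtheta q))
    (Submodule.mapQ _ _ (unitEmbed 𝔤 M₁ M₂) (Wsub_le_comap_unitEmbed 𝔤 M₁ M₂ vlam xtheta q))
    (by ext t; simp)
    (by
      refine Submodule.linearMap_qext _ ?_
      rw [LinearMap.comp_assoc, Submodule.mapQ_mkQ, ← LinearMap.comp_assoc, Submodule.mapQ_mkQ,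
        LinearMap.comp_assoc, LinearMap.id_comp]
      exact mkQ_unitEmbed_contract 𝔤 M₁ M₂ vlam xtheta q)

lemma quotientEquiv_mk (z : (M₁ ⊗[ℂ] UEnv 𝔤) ⊗[ℂ] M₂) :
    quotientEquiv 𝔤 M₁ M₂ vlam xtheta q (Submodule.Quotient.mk z) =
      Submodule.Quotient.mk (contract 𝔤 M₁ M₂ z) := rfl

end Relations

theorem zhu_bimodule_tensor_iso
    (vlam : M₁) (xtheta : 𝔤)
    (ℓ c : ℕ) :
    ∃ e : (((M₁ ⊗[ℂ] UEnv 𝔤) ⊗[ℂ] M₂) ⧸ relSub 𝔤 M₁ M₂ vlam xtheta (ℓ - c + 1))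
            ≃ₗ[ℂ] ((M₁ ⊗[ℂ] M₂) ⧸ Wsub 𝔤 M₁ M₂ vlam xtheta (ℓ - c + 1)),
      ∀ (x : 𝔤) (a : (M₁ ⊗[ℂ] UEnv 𝔤) ⊗[ℂ] M₂) (b : M₁ ⊗[ℂ] M₂),
        e (Submodule.Quotient.mk a) = Submodule.Quotient.mk b →
        e (Submodule.Quotient.mk (LactTM 𝔤 M₁ M₂ x a))
          = Submodule.Quotient.mk (Dact 𝔤 M₁ M₂ x b) := by
  refine ⟨quotientEquiv 𝔤 M₁ M₂ vlam xtheta (ℓ - c + 1), fun x a b hab => ?_⟩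
  rw [quotientEquiv_mk, Submodule.Quotient.eq] at hab ⊢
  rw [contract_LactTM, ← map_sub]
  exact Dact_mem_Wsub 𝔤 M₁ M₂ vlam xtheta _ x hab

end Stmt11
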